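/- Let V ∈ C¹(ℝⁿ, ℝ) with V'(q)·q ≥ μ₁V(q) − μ₂ for all q (μ₁ > 0, μ₂ ≥ 0), and h > μ₂/μ₁. Let E be the mean-zero subspace of H¹ with norm ‖u‖² = ∫₀¹|u̇|². Let f(u) = (1/2)‖u‖² ∫₀¹(h − V(u))dt and c > 0. If a sequence (uₙ) ⊂ E satisfies f(uₙ) → c and ⟨f'(uₙ), uₙ⟩ → 0, then (‖uₙ‖) is bounded. -/

import Mathlib

/-!
Superquadraticity gives, pointwise along `u`,
`h - V - ½⟪∇V, u⟫ ≤ (μ₂ - μ₁ h)/2 + (1 + μ₁/2)(h - V)`. Integrating and multiplying by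
`‖u‖² ≥ 0` turns this into `((μ₁ h - μ₂)/2) ‖u‖² ≤ (1 + μ₁/2) · 2 f(u) - ⟨f'(u), u⟩`.
The right-hand side converges to `(2 + μ₁) c`, and `μ₁ h - μ₂ > 0`, so `‖u‖²` is bounded.
-/

open scoped RealInnerProductSpace
open Filter Topology MeasureTheory

theorem ContDiff.continuous_gradient {E : Type*} [NormedAddCommGroup E] [InnerProductSpace ℝ E]
    [CompleteSpace E] {V : E → ℝ} (hV : ContDiff ℝ 1 V) : Continuous (gradient V) :=
  (InnerProductSpace.toDual ℝ E).symm.continuous.comp (hV.continuous_fderiv one_ne_zero)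

theorem integral_sub_sub_half_le_of_superquadratic {ψ φ : ℝ → ℝ} {μ₁ μ₂ h : ℝ}
    (hψ : IntervalIntegrable ψ volume 0 1) (hφ : IntervalIntegrable φ volume 0 1)
    (hφψ : ∀ t, μ₁ * ψ t - μ₂ ≤ φ t) :
    ∫ t in (0:ℝ)..1, (h - ψ t - 1 / 2 * φ t)
      ≤ (μ₂ - μ₁ * h) / 2 + (1 + μ₁ / 2) * ∫ t in (0:ℝ)..1, (h - ψ t) := by
  have hhψ : IntervalIntegrable (fun t => h - ψ t) volume 0 1 := intervalIntegrable_const.sub hψ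
  calc ∫ t in (0:ℝ)..1, (h - ψ t - 1 / 2 * φ t)
      ≤ ∫ t in (0:ℝ)..1, ((μ₂ - μ₁ * h) / 2 + (1 + μ₁ / 2) * (h - ψ t)) := by
        refine intervalIntegral.integral_mono_on zero_le_one (hhψ.sub (hφ.const_mul _))
          (intervalIntegrable_const.add (hhψ.const_mul _)) fun t _ => ?_
        linarith [hφψ t]
    _ = (μ₂ - μ₁ * h) / 2 + (1 + μ₁ / 2) * ∫ t in (0:ℝ)..1, (h - ψ t) := by
        rw [intervalIntegral.integral_add intervalIntegrable_const (hhψ.const_mul _),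
          intervalIntegral.integral_const_mul]
        simp

theorem exists_forall_le_of_mul_le_of_tendsto {a b : ℕ → ℝ} {ε L : ℝ} (hε : 0 < ε)
    (hab : ∀ k, ε * a k ≤ b k) (hb : Tendsto b atTop (𝓝 L)) : ∃ C, ∀ k, a k ≤ C := by
  obtain ⟨M, hM⟩ := hb.bddAbove_range
  exact ⟨M / ε, fun k => by rw [le_div_iff₀ hε]; linarith [hab k, hM ⟨k, rfl⟩]⟩

theorem stmt_13_general (n : ℕ) (V : EuclideanSpace ℝ (Fin n) → ℝ) (μ₁ μ₂ h c : ℝ)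
    (hV : ContDiff ℝ 1 V) (hμ₁ : 0 < μ₁)
    (hB₂ : ∀ q, ⟪gradient V q, q⟫ ≥ μ₁ * V q - μ₂)
    (hh : h > μ₂ / μ₁)
    (u : ℕ → ℝ → EuclideanSpace ℝ (Fin n))
    (hreg : ∀ k, ContDiff ℝ 1 (u k))
    (hf : Filter.Tendsto
      (fun k => (1/2) * (∫ t in (0:ℝ)..1, ‖deriv (u k) t‖ ^ 2)
        * (∫ t in (0:ℝ)..1, (h - V (u k t)))) Filter.atTop (nhds c))
    (hpair : Filter.Tendsto
      (fun k => (∫ t in (0:ℝ)..1, ‖deriv (u k) t‖ ^ 2)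
        * (∫ t in (0:ℝ)..1, (h - V (u k t) - (1/2) * ⟪gradient V (u k t), u k t⟫)))
      Filter.atTop (nhds 0)) :
    ∃ C : ℝ, ∀ k, (∫ t in (0:ℝ)..1, ‖deriv (u k) t‖ ^ 2) ≤ C := by
  have hgap : 0 < (μ₁ * h - μ₂) / 2 := by
    have := (div_lt_iff₀ hμ₁).1 hh
    linarith
  refine exists_forall_le_of_mul_le_of_tendsto hgap (fun k => ?_)
    (((hf.const_mul 2).const_mul (1 + μ₁ / 2)).sub hpair)
  have hu := (hreg k).continuous
  have hest := integral_sub_sub_half_le_of_superquadratic (h := h)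
    (ψ := fun t => V (u k t)) (φ := fun t => ⟪gradient V (u k t), u k t⟫)
    ((hV.continuous.comp hu).intervalIntegrable 0 1)
    (((hV.continuous_gradient.comp hu).inner hu).intervalIntegrable 0 1) (fun t => hB₂ (u k t))
  have hnorm : 0 ≤ ∫ t in (0:ℝ)..1, ‖deriv (u k) t‖ ^ 2 :=
    intervalIntegral.integral_nonneg zero_le_one fun t _ => by positivity
  have hpair_le := mul_le_mul_of_nonneg_left hest hnorm
  linarith

theorem stmt_13 (n : ℕ) (V : EuclideanSpace ℝ (Fin n) → ℝ) (μ₁ μ₂ h c : ℝ)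
    (hV : ContDiff ℝ 1 V) (hμ₁ : 0 < μ₁) (hμ₂ : 0 ≤ μ₂)
    (hB₂ : ∀ q, ⟪gradient V q, q⟫ ≥ μ₁ * V q - μ₂)
    (hh : h > μ₂ / μ₁) (hc : 0 < c)
    (u : ℕ → ℝ → EuclideanSpace ℝ (Fin n))
    (hreg : ∀ k, ContDiff ℝ 1 (u k))
    (hper : ∀ k, Function.Periodic (u k) 1)
    (hmean : ∀ k, (∫ t in (0:ℝ)..1, u k t) = 0)
    (hf : Filter.Tendsto
      (fun k => (1/2) * (∫ t in (0:ℝ)..1, ‖deriv (u k) t‖ ^ 2)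
        * (∫ t in (0:ℝ)..1, (h - V (u k t)))) Filter.atTop (nhds c))
    (hpair : Filter.Tendsto
      (fun k => (∫ t in (0:ℝ)..1, ‖deriv (u k) t‖ ^ 2)
        * (∫ t in (0:ℝ)..1, (h - V (u k t) - (1/2) * ⟪gradient V (u k t), u k t⟫)))
      Filter.atTop (nhds 0)) :
    ∃ C : ℝ, ∀ k, (∫ t in (0:ℝ)..1, ‖deriv (u k) t‖ ^ 2) ≤ C :=
  stmt_13_general n V μ₁ μ₂ h c hV hμ₁ hB₂ hh u hreg hf hpair
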